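/- arXiv:1507.05159 — 2 statements merged into one kernel-verified Lean document; each statement's English description precedes it below -/
import Mathlib

section
/- In the ring of formal series in three commuting variables x₀, x₁, x₂, the identity x₁⁻¹ δ((x₂+x₀)/x₁) = x₂⁻¹ δ((x₁−x₀)/x₂) holds, where negative powers of a binomial are expanded in nonnegative powers of the second summand. -/
/-- The generalized binomial coefficient `C(n,m) = n(n-1)⋯(n-m+1)/m!`
for `n ∈ ℤ`, `m ∈ ℕ`, valued in `ℂ`. -/
noncomputable def genChoose (n : ℤ) (m : ℕ) : ℂ :=
  (∏ i ∈ Finset.range m, ((n : ℂ) - i)) / (m.factorial : ℂ)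

/-- Coefficient of `x₀^a x₁^b x₂^c` in
`x₁⁻¹ δ((x₂+x₀)/x₁) = Σ_{n∈ℤ, m∈ℕ} C(n,m) x₂^{n-m} x₀^m x₁^{-n-1}`,
where `(x₂+x₀)ⁿ` is expanded in nonnegative powers of the second summand `x₀`.
Only the pair `(n,m) = (-b-1, a)` can contribute. -/
noncomputable def coeffLHS (a b c : ℤ) : ℂ :=
  if 0 ≤ a ∧ a + b + c = -1 then genChoose (-b - 1) a.toNat else 0

/-- Coefficient of `x₀^a x₁^b x₂^c` in
`x₂⁻¹ δ((x₁−x₀)/x₂) = Σ_{n∈ℤ, m∈ℕ} (−1)^m C(n,m) x₁^{n-m} x₀^m x₂^{-n-1}`,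
where `(x₁−x₀)ⁿ` is expanded in nonnegative powers of the second summand `−x₀`.
Only the pair `(n,m) = (-c-1, a)` can contribute. -/
noncomputable def coeffRHS (a b c : ℤ) : ℂ :=
  if 0 ≤ a ∧ a + b + c = -1 then (-1 : ℂ) ^ a.toNat * genChoose (-c - 1) a.toNat else 0

/-- The formal-series identity `x₁⁻¹ δ((x₂+x₀)/x₁) = x₂⁻¹ δ((x₁−x₀)/x₂)`,
stated as equality of all coefficients. -/
theorem stmt1 : ∀ a b c : ℤ, coeffLHS a b c = coeffRHS a b c := by
  intro a b c
  unfold coeffLHS coeffRHS genChoose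
  split
  case isFalse => rfl
  case isTrue h =>
    obtain ⟨ha, hsum⟩ := h
    set m := a.toNat with hm
    have ham : (a : ℂ) = (m : ℂ) := by
      norm_cast; exact (Int.toNat_of_nonneg ha).symm
    have hc : ((-c - 1 : ℤ) : ℂ) = (m : ℂ) + (b : ℂ) := by
      have h2 : (-c - 1 : ℤ) = a + b := by omega
      rw [h2]; push_cast; rw [ham]
    simp only [hc]
    rw [← mul_div_assoc]
    congr 1
    rw [← Finset.prod_range_reflect (fun i => ((m : ℂ) + b - i)) m]
    have key : ∀ i ∈ Finset.range m,
        ((↑(-b - 1 : ℤ) : ℂ) - i) = (-1) * ((m : ℂ) + b - ((m - 1 - i : ℕ) : ℂ)) := by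
      intro i hi
      simp only [Finset.mem_range] at hi
      have : (m - 1 - i : ℕ) = m - 1 - i := rfl
      rw [Nat.cast_sub (by omega), Nat.cast_sub (by omega)]
      push_cast
      ring
    rw [Finset.prod_congr rfl key, Finset.prod_mul_distrib, Finset.prod_const,
      Finset.card_range]
end

section
/- Let f(x₀,x₁,x₂) = g(x₀,x₁,x₂)/(x₀^r x₁^s x₂^t) where g is a polynomial over ℂ and r,s,t ∈ ℤ. Then x₁⁻¹ δ((x₂+x₀)/x₁) · ι₂₀(f|_{x₁=x₀+x₂}) = x₂⁻¹ δ((x₁−x₀)/x₂) · ι₁₀(f|_{x₂=x₁−x₀}) as formal series in x₀, x₁, x₂. -/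
open MvPolynomial

/-- Coefficient of `x₀^α x₂^γ` in `ι₂₀(f|_{x₁=x₀+x₂})`, where
`f = g/(x₀^r x₁^s x₂^t)` with `g` a polynomial in `x₀,x₁,x₂` (variables `0,1,2`):
substitute `x₁ = x₀ + x₂` and expand all powers of `(x₂+x₀)` in nonnegative
powers of `x₀`, i.e. `(x₂+x₀)^N = Σ_{m∈ℕ} C(N,m) x₂^{N−m} x₀^m`. For each
monomial `x₀^{d₀}x₁^{d₁}x₂^{d₂}` of `g`, the contribution to the coefficient of
`x₀^α x₂^γ` comes from `m = α − d₀ + r ≥ 0` with total degree matching. -/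
noncomputable def iota20Coeff (g : MvPolynomial (Fin 3) ℂ) (r s t : ℤ) (α γ : ℤ) : ℂ :=
  ∑ d ∈ g.support,
    if 0 ≤ α - (d 0 : ℤ) + r ∧ α + γ = (d 0 : ℤ) + (d 1 : ℤ) + (d 2 : ℤ) - r - s - t then
      g.coeff d * genChoose ((d 1 : ℤ) - s) (α - (d 0 : ℤ) + r).toNat
    else 0

/-- Coefficient of `x₀^α x₁^β` in `ι₁₀(f|_{x₂=x₁−x₀})`, where
`f = g/(x₀^r x₁^s x₂^t)`: substitute `x₂ = x₁ − x₀` and expand all powers of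
`(x₁−x₀)` in nonnegative powers of `x₀`, i.e.
`(x₁−x₀)^N = Σ_{m∈ℕ} (−1)^m C(N,m) x₁^{N−m} x₀^m`. -/
noncomputable def iota10Coeff (g : MvPolynomial (Fin 3) ℂ) (r s t : ℤ) (α β : ℤ) : ℂ :=
  ∑ d ∈ g.support,
    if 0 ≤ α - (d 0 : ℤ) + r ∧ α + β = (d 0 : ℤ) + (d 1 : ℤ) + (d 2 : ℤ) - r - s - t then
      g.coeff d * (-1 : ℂ) ^ (α - (d 0 : ℤ) + r).toNat *
        genChoose ((d 2 : ℤ) - t) (α - (d 0 : ℤ) + r).toNat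
    else 0

/-- Coefficient of `x₀^a x₁^b x₂^c` in `x₁⁻¹ δ((x₂+x₀)/x₁) · ι₂₀(f|_{x₁=x₀+x₂})`:
the delta factor contributes `C(−b−1,m) x₀^m x₂^{−b−1−m} x₁^b` for `m ∈ ℕ`. -/
noncomputable def lhsCoeff (g : MvPolynomial (Fin 3) ℂ) (r s t : ℤ) (a b c : ℤ) : ℂ :=
  ∑ᶠ m : ℕ, genChoose (-b - 1) m * iota20Coeff g r s t (a - m) (c + b + 1 + m)

/-- Coefficient of `x₀^a x₁^b x₂^c` in `x₂⁻¹ δ((x₁−x₀)/x₂) · ι₁₀(f|_{x₂=x₁−x₀})`: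
the delta factor contributes `(−1)^m C(−c−1,m) x₀^m x₁^{−c−1−m} x₂^c` for `m ∈ ℕ`. -/
noncomputable def rhsCoeff (g : MvPolynomial (Fin 3) ℂ) (r s t : ℤ) (a b c : ℤ) : ℂ :=
  ∑ᶠ m : ℕ, (-1 : ℂ) ^ m * genChoose (-c - 1) m * iota10Coeff g r s t (a - m) (b + c + 1 + m)

/-! ### Auxiliary lemmas -/

/-- `genChoose` with a complex argument. -/
noncomputable def gch (x : ℂ) (m : ℕ) : ℂ :=
  (∏ i ∈ Finset.range m, (x - i)) / (m.factorial : ℂ)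

lemma genChoose_eq_gch (n : ℤ) (m : ℕ) : genChoose n m = gch (n : ℂ) m := rfl

lemma descP_smeval (x : ℂ) : ∀ n : ℕ,
    (descPochhammer ℤ n).smeval x = ∏ i ∈ Finset.range n, (x - i) := by
  intro n
  induction n with
  | zero => simp [Polynomial.smeval_one]
  | succ n ih =>
    rw [descPochhammer_succ_right, Polynomial.smeval_mul, ih, Finset.prod_range_succ]
    congr 1
    simp [Polynomial.smeval_sub, Polynomial.smeval_natCast]

lemma gch_eq_ringChoose (x : ℂ) (k : ℕ) : gch x k = Ring.choose x k := by
  have h := Ring.descPochhammer_eq_factorial_smul_choose x k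
  rw [descP_smeval] at h
  have hne : (k.factorial : ℂ) ≠ 0 := Nat.cast_ne_zero.mpr k.factorial_ne_zero
  rw [gch, h, nsmul_eq_mul]
  field_simp

lemma gch_vandermonde (x y : ℂ) (k : ℕ) :
    ∑ m ∈ Finset.range (k + 1), gch x m * gch y (k - m) = gch (x + y) k := by
  simp only [gch_eq_ringChoose]
  rw [Ring.add_choose_eq k (Commute.all x y),
    Finset.Nat.sum_antidiagonal_eq_sum_range_succ_mk]

lemma gch_reflect (u : ℂ) (k : ℕ) : gch u k = (-1 : ℂ) ^ k * gch ((k : ℂ) - u - 1) k := by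
  unfold gch
  rw [← mul_div_assoc]
  congr 1
  have : ∀ i ∈ Finset.range k, ((k : ℂ) - u - 1 - i) = -(u - ((k - 1 - i : ℕ) : ℂ)) := by
    intro i hi
    have hik := Finset.mem_range.mp hi
    have h1 : i ≤ k - 1 := by omega
    have h2 : 1 ≤ k := by omega
    rw [Nat.cast_sub h1, Nat.cast_sub h2, Nat.cast_one]
    ring
  rw [Finset.prod_congr rfl this]
  simp only [neg_eq_neg_one_mul ((u : ℂ) - _), Finset.prod_mul_distrib, Finset.prod_const,
    Finset.card_range]
  rw [← mul_assoc, ← mul_pow]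
  simp only [neg_mul_neg, one_mul, one_pow]
  exact (Finset.prod_range_reflect (fun j => u - (j : ℂ)) k).symm

lemma sum_range_eq_of_vanish {f : ℕ → ℂ} {n K : ℕ} (h : n + 1 ≤ K)
    (hv : ∀ m, n < m → f m = 0) :
    ∑ m ∈ Finset.range K, f m = ∑ m ∈ Finset.range (n + 1), f m :=
  (Finset.sum_subset (Finset.range_subset_range.mpr h)
    (fun m _ hm => hv m (by simp only [Finset.mem_range] at hm; omega))).symm

/-- The key per-monomial identity. -/
lemma key (w : ℂ) (d0 d1 d2 : ℕ) (r s t a b c : ℤ) (K : ℕ)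
    (hK : ∀ m : ℕ, (0 : ℤ) ≤ (a - m) - d0 + r → m < K) :
    (∑ m ∈ Finset.range K, genChoose (-b - 1) m *
      (if 0 ≤ (a - (m : ℤ)) - (d0 : ℤ) + r ∧
          (a - (m : ℤ)) + (c + b + 1 + (m : ℤ)) = (d0 : ℤ) + (d1 : ℤ) + (d2 : ℤ) - r - s - t then
        w * genChoose ((d1 : ℤ) - s) ((a - (m : ℤ)) - (d0 : ℤ) + r).toNat
      else 0))
    = ∑ m ∈ Finset.range K, (-1 : ℂ) ^ m * genChoose (-c - 1) m *
      (if 0 ≤ (a - (m : ℤ)) - (d0 : ℤ) + r ∧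
          (a - (m : ℤ)) + (b + c + 1 + (m : ℤ)) = (d0 : ℤ) + (d1 : ℤ) + (d2 : ℤ) - r - s - t then
        w * (-1 : ℂ) ^ ((a - (m : ℤ)) - (d0 : ℤ) + r).toNat *
          genChoose ((d2 : ℤ) - t) ((a - (m : ℤ)) - (d0 : ℤ) + r).toNat
      else 0) := by
  by_cases hD : a + b + c + 1 = (d0 : ℤ) + (d1 : ℤ) + (d2 : ℤ) - r - s - t
  · by_cases hk : (0 : ℤ) ≤ a - (d0 : ℤ) + r
    · set kn : ℕ := (a - (d0 : ℤ) + r).toNat with hkn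
      have hknZ : (kn : ℤ) = a - (d0 : ℤ) + r := Int.toNat_of_nonneg hk
      have hknK : kn + 1 ≤ K := by
        have := hK kn (by omega)
        omega
      have eL : (∑ m ∈ Finset.range K, genChoose (-b - 1) m *
          (if 0 ≤ (a - (m : ℤ)) - (d0 : ℤ) + r ∧
              (a - (m : ℤ)) + (c + b + 1 + (m : ℤ)) =
                (d0 : ℤ) + (d1 : ℤ) + (d2 : ℤ) - r - s - t then
            w * genChoose ((d1 : ℤ) - s) ((a - (m : ℤ)) - (d0 : ℤ) + r).toNat
          else 0))
          = w * gch (((-b - 1 : ℤ) : ℂ) + (((d1 : ℤ) - s : ℤ) : ℂ)) kn := by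
        rw [sum_range_eq_of_vanish hknK (fun m hm => by
          rw [if_neg, mul_zero]
          rintro ⟨h1, -⟩
          omega)]
        rw [← gch_vandermonde, Finset.mul_sum]
        refine Finset.sum_congr rfl fun m hm => ?_
        have hm' := Finset.mem_range.mp hm
        rw [if_pos ⟨by omega, by omega⟩]
        have ht : ((a - (m : ℤ)) - (d0 : ℤ) + r).toNat = kn - m := by omega
        rw [ht, genChoose_eq_gch, genChoose_eq_gch]
        ring
      have eR : (∑ m ∈ Finset.range K, (-1 : ℂ) ^ m * genChoose (-c - 1) m *
          (if 0 ≤ (a - (m : ℤ)) - (d0 : ℤ) + r ∧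
              (a - (m : ℤ)) + (b + c + 1 + (m : ℤ)) =
                (d0 : ℤ) + (d1 : ℤ) + (d2 : ℤ) - r - s - t then
            w * (-1 : ℂ) ^ ((a - (m : ℤ)) - (d0 : ℤ) + r).toNat *
              genChoose ((d2 : ℤ) - t) ((a - (m : ℤ)) - (d0 : ℤ) + r).toNat
          else 0))
          = w * ((-1 : ℂ) ^ kn *
              gch (((-c - 1 : ℤ) : ℂ) + (((d2 : ℤ) - t : ℤ) : ℂ)) kn) := by
        rw [sum_range_eq_of_vanish hknK (fun m hm => by
          rw [if_neg, mul_zero]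
          rintro ⟨h1, -⟩
          omega)]
        rw [← gch_vandermonde, Finset.mul_sum, Finset.mul_sum]
        refine Finset.sum_congr rfl fun m hm => ?_
        have hm' := Finset.mem_range.mp hm
        rw [if_pos ⟨by omega, by omega⟩]
        have ht : ((a - (m : ℤ)) - (d0 : ℤ) + r).toNat = kn - m := by omega
        rw [ht, genChoose_eq_gch, genChoose_eq_gch]
        have hp : (-1 : ℂ) ^ m * (-1 : ℂ) ^ (kn - m) = (-1 : ℂ) ^ kn := by
          rw [← pow_add]
          congr 1
          omega
        linear_combination (w * gch (((-c - 1 : ℤ) : ℂ)) m *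
          gch ((((d2 : ℤ) - t : ℤ)) : ℂ) (kn - m)) * hp
      rw [eL, eR]
      have hc : (a : ℂ) + b + c + 1 = (d0 : ℂ) + d1 + d2 - r - s - t := by
        exact_mod_cast congrArg (Int.cast : ℤ → ℂ) hD
      have hk' : ((kn : ℕ) : ℂ) = (a : ℂ) - d0 + r := by
        exact_mod_cast congrArg (Int.cast : ℤ → ℂ) hknZ
      have harg : ((kn : ℕ) : ℂ) - (((-b - 1 : ℤ) : ℂ) + (((d1 : ℤ) - s : ℤ) : ℂ)) - 1
          = ((-c - 1 : ℤ) : ℂ) + (((d2 : ℤ) - t : ℤ) : ℂ) := by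
        push_cast
        linear_combination hk' + hc
      rw [gch_reflect (((-b - 1 : ℤ) : ℂ) + (((d1 : ℤ) - s : ℤ) : ℂ)) kn, harg]
    · refine Eq.trans (Finset.sum_eq_zero fun m hm => ?_)
        (Finset.sum_eq_zero fun m hm => ?_).symm
      · rw [if_neg, mul_zero]
        rintro ⟨h1, -⟩
        omega
      · rw [if_neg, mul_zero]
        rintro ⟨h1, -⟩
        omega
  · refine Eq.trans (Finset.sum_eq_zero fun m hm => ?_)
      (Finset.sum_eq_zero fun m hm => ?_).symm
    · rw [if_neg, mul_zero]
      rintro ⟨-, h2⟩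
      omega
    · rw [if_neg, mul_zero]
      rintro ⟨-, h2⟩
      omega

/-- For `f(x₀,x₁,x₂) = g(x₀,x₁,x₂)/(x₀^r x₁^s x₂^t)` with `g` a polynomial over
`ℂ` and `r,s,t ∈ ℤ`, the formal-series identity
`x₁⁻¹ δ((x₂+x₀)/x₁) · ι₂₀(f|_{x₁=x₀+x₂}) = x₂⁻¹ δ((x₁−x₀)/x₂) · ι₁₀(f|_{x₂=x₁−x₀})`
holds, stated coefficientwise. -/
theorem stmt4 (g : MvPolynomial (Fin 3) ℂ) (r s t : ℤ) :
    ∀ a b c : ℤ, lhsCoeff g r s t a b c = rhsCoeff g r s t a b c := by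
  intro a b c
  set K : ℕ := (a + r + 1).toNat with hKdef
  have hKprop : ∀ (m : ℕ) (d0 : ℕ), (0 : ℤ) ≤ (a - m) - d0 + r → m < K := by
    intro m d0 h
    omega
  have hL : lhsCoeff g r s t a b c = ∑ m ∈ Finset.range K,
      genChoose (-b - 1) m * iota20Coeff g r s t (a - m) (c + b + 1 + m) := by
    apply finsum_eq_sum_of_support_subset
    intro m hm
    simp only [Function.mem_support] at hm
    by_contra hmK
    simp only [Finset.coe_range, Set.mem_Iio, not_lt] at hmK
    apply hm
    have h0 : iota20Coeff g r s t (a - m) (c + b + 1 + m) = 0 := by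
      unfold iota20Coeff
      refine Finset.sum_eq_zero fun d hd => ?_
      rw [if_neg]
      rintro ⟨h1, -⟩
      exact absurd (hKprop m (d 0) h1) (by omega)
    rw [h0, mul_zero]
  have hR : rhsCoeff g r s t a b c = ∑ m ∈ Finset.range K,
      (-1 : ℂ) ^ m * genChoose (-c - 1) m * iota10Coeff g r s t (a - m) (b + c + 1 + m) := by
    apply finsum_eq_sum_of_support_subset
    intro m hm
    simp only [Function.mem_support] at hm
    by_contra hmK
    simp only [Finset.coe_range, Set.mem_Iio, not_lt] at hmK
    apply hm
    have h0 : iota10Coeff g r s t (a - m) (b + c + 1 + m) = 0 := by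
      unfold iota10Coeff
      refine Finset.sum_eq_zero fun d hd => ?_
      rw [if_neg]
      rintro ⟨h1, -⟩
      exact absurd (hKprop m (d 0) h1) (by omega)
    rw [h0, mul_zero]
  rw [hL, hR]
  simp only [iota20Coeff, iota10Coeff, Finset.mul_sum]
  rw [Finset.sum_comm]
  conv_rhs => rw [Finset.sum_comm]
  exact Finset.sum_congr rfl fun d hd =>
    key (g.coeff d) (d 0) (d 1) (d 2) r s t a b c K (fun m h => hKprop m (d 0) h)
end
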